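/- For ξ, η ∈ ℝ² with ξ, ξ-η ≠ 0, ∂_ξ(⟨ξ⟩ + ⟨ξ-η⟩) = ξ/⟨ξ⟩ + (ξ-η)/⟨ξ-η⟩, and there exists a 2×2 matrix-valued function Q̃₁(ξ,η) with c/⟨|ξ|+|η|⟩³ ≤ ‖Q̃₁(ξ,η)‖ ≤ C such that ξ/⟨ξ⟩ + (ξ-η)/⟨ξ-η⟩ = Q̃₁(ξ,η)(2ξ - η). -/

import Mathlib

open scoped RealInnerProductSpace

noncomputable def jap2 (x : EuclideanSpace ℝ (Fin 2)) : ℝ := Real.sqrt (1 + ‖x‖ ^ 2)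

noncomputable def japR (r : ℝ) : ℝ := Real.sqrt (1 + r ^ 2)

/-!
Put `φ x = x/⟨x⟩` and `y = η - ξ`, so that the gradient is `φ ξ - φ y` and `2ξ - η = ξ - y`.
Everything is controlled by `s = ⟨x⟩⟨y⟩ - 1 - ⟪x, y⟫`, which is `|X||Y| - ⟪X, Y⟫` for the lifts
`X = (x, 1)`, `Y = (y, 1)`: explicit identities express `‖x - y‖²`, `‖φ x - φ y‖²` and
`⟪φ x - φ y, x - y⟫` through `s`, and together with `(⟨x⟩ - ⟨y⟩)² ≤ 2⟨x⟩⟨y⟩ s` they show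
`‖φ x - φ y‖ ≤ ‖x - y‖ ≤ (⟨x⟩ + ⟨y⟩)⟨x⟩⟨y⟩ ‖φ x - φ y‖`. The rank-one operator
`v ↦ ⟪x - y, v⟫ / ‖x - y‖² • (φ x - φ y)` then has norm `‖φ x - φ y‖ / ‖x - y‖ ∈ [1/(2M³), 1]`
as soon as `⟨x⟩, ⟨y⟩ ≤ M`, e.g. for `M = ⟨|ξ| + |η|⟩`.
-/

lemma sub_sq_le_of_sq_eq_one_add_sq {p q a b : ℝ} (hp : 0 ≤ p) (hq : 0 ≤ q) (ha : 0 ≤ a)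
    (hb : 0 ≤ b) (ha2 : a ^ 2 = 1 + p ^ 2) (hb2 : b ^ 2 = 1 + q ^ 2) :
    (a - b) ^ 2 ≤ 2 * (a * b) * (a * b - 1 - p * q) := by
  have ha1 : 1 ≤ a := by nlinarith
  have hb1 : 1 ≤ b := by nlinarith
  have hpa : p ≤ a := by nlinarith
  have hqb : q ≤ b := by nlinarith
  have hgap : (a * b - 1 - p * q) * (a * b + 1 + p * q) = (p - q) ^ 2 := by
    linear_combination b ^ 2 * ha2 + (1 + p ^ 2) * hb2
  have hdiff : (a - b) ^ 2 * (a + b) ^ 2 = (p - q) ^ 2 * (p + q) ^ 2 := by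
    linear_combination (a ^ 2 - b ^ 2 + p ^ 2 - q ^ 2) * (ha2 - hb2)
  have hpq : 1 + p * q ≤ a * b := by
    nlinarith [sq_nonneg (p - q), mul_nonneg hp hq, mul_nonneg ha hb]
  have hpos : 0 < (a + b) ^ 2 * (a * b + 1 + p * q) := by
    have : 0 < a + b := by linarith
    positivity
  refine le_of_mul_le_mul_right ?_ hpos
  calc (a - b) ^ 2 * ((a + b) ^ 2 * (a * b + 1 + p * q))
      = (a * b - 1 - p * q) * (a * b + 1 + p * q) * ((p + q) ^ 2 * (a * b + 1 + p * q)) := by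
        rw [hgap]; linear_combination (a * b + 1 + p * q) * hdiff
    _ ≤ (a * b - 1 - p * q) * (a * b + 1 + p * q) * ((a + b) ^ 2 * (2 * (a * b))) := by
        have : 0 ≤ a * b - 1 - p * q := by linarith
        gcongr
        all_goals linarith
    _ = 2 * (a * b) * (a * b - 1 - p * q) * ((a + b) ^ 2 * (a * b + 1 + p * q)) := by ring

section Japanese

variable {E : Type*} [NormedAddCommGroup E]

noncomputable def jap (x : E) : ℝ := √(1 + ‖x‖ ^ 2)

lemma sq_jap (x : E) : jap x ^ 2 = 1 + ‖x‖ ^ 2 := Real.sq_sqrt (by positivity)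

lemma one_le_jap (x : E) : 1 ≤ jap x :=
  Real.one_le_sqrt.mpr (by nlinarith [sq_nonneg ‖x‖])

lemma jap_pos (x : E) : 0 < jap x := zero_lt_one.trans_le (one_le_jap x)

lemma jap_neg (x : E) : jap (-x) = jap x := by simp only [jap, norm_neg]

lemma jap_le_sqrt_one_add_sq {x : E} {r : ℝ} (h : ‖x‖ ≤ r) : jap x ≤ √(1 + r ^ 2) :=
  Real.sqrt_le_sqrt (by nlinarith [norm_nonneg x])

variable [InnerProductSpace ℝ E]

lemma hasGradientAt_jap [CompleteSpace E] (x : E) : HasGradientAt jap ((jap x)⁻¹ • x) x := by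
  rw [hasGradientAt_iff_hasFDerivAt]
  have h := ((hasFDerivAt_id x).norm_sq.const_add 1).sqrt (by positivity)
  refine h.congr_fderiv (ContinuousLinearMap.ext fun v => ?_)
  simp only [jap, id_eq, one_div, ContinuousLinearMap.comp_id, smul_apply,
    coe_innerSL_apply, nsmul_eq_mul, Nat.cast_ofNat, smul_eq_mul, map_smul,
    InnerProductSpace.toDual_apply_apply]
  ring

lemma hasGradientAt_jap_add_jap_sub [CompleteSpace E] (η ξ : E) :
    HasGradientAt (fun z => jap z + jap (z - η))
      ((jap ξ)⁻¹ • ξ + (jap (ξ - η))⁻¹ • (ξ - η)) ξ := by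
  rw [hasGradientAt_iff_hasFDerivAt, map_add]
  have h := (hasGradientAt_jap (ξ - η)).hasFDerivAt.comp ξ (hasFDerivAt_sub_const η)
  rw [ContinuousLinearMap.comp_id] at h
  exact (hasGradientAt_jap ξ).hasFDerivAt.add h

lemma sq_jap_sub_le (x y : E) :
    (jap x - jap y) ^ 2 ≤ 2 * (jap x * jap y) * (jap x * jap y - 1 - ⟪x, y⟫) := by
  have h := sub_sq_le_of_sq_eq_one_add_sq (norm_nonneg x) (norm_nonneg y) (jap_pos x).le
    (jap_pos y).le (sq_jap x) (sq_jap y)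
  have hab : 0 ≤ 2 * (jap x * jap y) := by have := jap_pos x; have := jap_pos y; positivity
  nlinarith [real_inner_le_norm x y]

lemma inner_add_one_le_jap_mul_jap (x y : E) : ⟪x, y⟫ + 1 ≤ jap x * jap y := by
  have hab : 0 < 2 * (jap x * jap y) := by have := jap_pos x; have := jap_pos y; positivity
  have := nonneg_of_mul_nonneg_right ((sq_nonneg _).trans (sq_jap_sub_le x y)) hab
  linarith

lemma norm_sub_sq_eq_sq_jap_sub_add (x y : E) :
    ‖x - y‖ ^ 2 = (jap x - jap y) ^ 2 + 2 * (jap x * jap y - 1 - ⟪x, y⟫) := by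
  rw [norm_sub_sq_real]
  linear_combination -(sq_jap x) - sq_jap y

lemma inner_smul_jap_sub_smul_jap (x y : E) :
    ⟪(jap x)⁻¹ • x - (jap y)⁻¹ • y, x - y⟫
      = (jap x + jap y) * (jap x * jap y - 1 - ⟪x, y⟫) / (jap x * jap y) := by
  have ha := (jap_pos x).ne'
  have hb := (jap_pos y).ne'
  simp only [inner_sub_left, inner_sub_right, real_inner_smul_left, real_inner_self_eq_norm_sq,
    real_inner_comm x y]
  field_simp
  linear_combination -(jap y) * sq_jap x - jap x * sq_jap y

lemma norm_smul_jap_sub_smul_jap_sq (x y : E) :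
    ‖(jap x)⁻¹ • x - (jap y)⁻¹ • y‖ ^ 2
      = 2 * (jap x * jap y - 1 - ⟪x, y⟫) / (jap x * jap y) - ((jap x)⁻¹ - (jap y)⁻¹) ^ 2 := by
  have ha := (jap_pos x).ne'
  have hb := (jap_pos y).ne'
  rw [norm_sub_sq_real]
  simp only [norm_smul, real_inner_smul_left, real_inner_smul_right, Real.norm_eq_abs,
    abs_inv, abs_of_pos (jap_pos x), abs_of_pos (jap_pos y)]
  field_simp
  linear_combination -(jap y) ^ 2 * sq_jap x - (jap x) ^ 2 * sq_jap y

lemma norm_smul_jap_sub_smul_jap_le (x y : E) :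
    ‖(jap x)⁻¹ • x - (jap y)⁻¹ • y‖ ≤ ‖x - y‖ := by
  have hab : 1 ≤ jap x * jap y := one_le_mul_of_one_le_of_one_le (one_le_jap x) (one_le_jap y)
  have hs : 0 ≤ jap x * jap y - 1 - ⟪x, y⟫ := by
    linarith [inner_add_one_le_jap_mul_jap x y]
  refine (pow_le_pow_iff_left₀ (norm_nonneg _) (norm_nonneg _) two_ne_zero).mp ?_
  rw [norm_smul_jap_sub_smul_jap_sq, norm_sub_sq_eq_sq_jap_sub_add]
  have := div_le_self (by positivity : 0 ≤ 2 * (jap x * jap y - 1 - ⟪x, y⟫)) hab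
  nlinarith [sq_nonneg ((jap x)⁻¹ - (jap y)⁻¹), sq_nonneg (jap x - jap y)]

lemma norm_sub_le_mul_norm_smul_jap_sub_smul_jap (x y : E) :
    ‖x - y‖ ≤ (jap x + jap y) * (jap x * jap y) * ‖(jap x)⁻¹ • x - (jap y)⁻¹ • y‖ := by
  have ha := one_le_jap x
  have hb := one_le_jap y
  have hsq := sq_jap_sub_le x y
  have hs : 0 ≤ jap x * jap y - 1 - ⟪x, y⟫ := by linarith [inner_add_one_le_jap_mul_jap x y]
  have hsum : 2 * (jap x * jap y) + 2 ≤ (jap x + jap y) ^ 2 := by nlinarith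
  have hsq_le : ‖x - y‖ ^ 2
      ≤ (jap x + jap y) * (jap x * jap y) * (‖(jap x)⁻¹ • x - (jap y)⁻¹ • y‖ * ‖x - y‖) := by
    calc ‖x - y‖ ^ 2 ≤ (jap x + jap y) ^ 2 * (jap x * jap y - 1 - ⟪x, y⟫) := by
          rw [norm_sub_sq_eq_sq_jap_sub_add]; nlinarith [mul_le_mul_of_nonneg_right hsum hs]
      _ = (jap x + jap y) * (jap x * jap y) * ⟪(jap x)⁻¹ • x - (jap y)⁻¹ • y, x - y⟫ := by
          rw [inner_smul_jap_sub_smul_jap]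
          field_simp [(jap_pos x).ne', (jap_pos y).ne']
      _ ≤ _ := by
          gcongr
          exact real_inner_le_norm _ _
  rcases (norm_nonneg (x - y)).eq_or_lt with h | h
  · rw [← h]; positivity
  · nlinarith

lemma exists_clm_apply_eq_of_norm_le [Nontrivial E] {u g : E} {K : ℝ} (hK : 1 ≤ K)
    (hlow : ‖u‖ ≤ K * ‖g‖) (hup : ‖g‖ ≤ ‖u‖) :
    ∃ T : E →L[ℝ] E, T u = g ∧ K⁻¹ ≤ ‖T‖ ∧ ‖T‖ ≤ 1 := by
  rcases eq_or_ne u 0 with rfl | hu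
  · refine ⟨ContinuousLinearMap.id ℝ E, ?_, ?_, ?_⟩
    · simpa using (norm_le_zero_iff.mp (by simpa using hup)).symm
    · rw [ContinuousLinearMap.norm_id]; exact inv_le_one_of_one_le₀ hK
    · rw [ContinuousLinearMap.norm_id]
  have hu' : 0 < ‖u‖ := norm_pos_iff.mpr hu
  have hnorm : ‖InnerProductSpace.rankOne ℝ g ((‖u‖ ^ 2)⁻¹ • u)‖ = ‖g‖ / ‖u‖ := by
    rw [InnerProductSpace.norm_rankOne, norm_smul, norm_inv, norm_pow, Real.norm_eq_abs,
      abs_norm]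
    field_simp
  refine ⟨InnerProductSpace.rankOne ℝ g ((‖u‖ ^ 2)⁻¹ • u), ?_, ?_, ?_⟩
  · rw [InnerProductSpace.rankOne_apply, real_inner_smul_left, real_inner_self_eq_norm_sq,
      inv_mul_cancel₀ (by positivity), one_smul]
  · rw [hnorm, le_div_iff₀ hu', inv_mul_le_iff₀ (by linarith)]
    exact hlow
  · rw [hnorm, div_le_one hu']
    exact hup

lemma exists_clm_apply_sub_eq_smul_jap_sub_smul_jap [Nontrivial E] (x y : E) {M : ℝ}
    (hx : jap x ≤ M) (hy : jap y ≤ M) :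
    ∃ T : E →L[ℝ] E, T (x - y) = (jap x)⁻¹ • x - (jap y)⁻¹ • y ∧
      (2 * M ^ 3)⁻¹ ≤ ‖T‖ ∧ ‖T‖ ≤ 1 := by
  have ha := one_le_jap x
  have hb := one_le_jap y
  have hM : 1 ≤ M := ha.trans hx
  refine exists_clm_apply_eq_of_norm_le (by nlinarith [one_le_pow₀ (n := 3) hM]) ?_
    (norm_smul_jap_sub_smul_jap_le x y)
  refine (norm_sub_le_mul_norm_smul_jap_sub_smul_jap x y).trans
    (mul_le_mul_of_nonneg_right ?_ (norm_nonneg _))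
  calc (jap x + jap y) * (jap x * jap y) ≤ (M + M) * (M * M) := by gcongr
    _ = 2 * M ^ 3 := by ring

end Japanese

/-- `∂_ξ(⟨ξ⟩ + ⟨ξ-η⟩) = ξ/⟨ξ⟩ + (ξ-η)/⟨ξ-η⟩`, and this gradient can be written as
`Q̃₁(ξ,η)(2ξ - η)` with `c/⟨|ξ|+|η|⟩³ ≤ ‖Q̃₁(ξ,η)‖ ≤ C`. -/
theorem stmt13 : ∃ c C : ℝ, 0 < c ∧ 0 < C ∧
    ∃ Q : EuclideanSpace ℝ (Fin 2) → EuclideanSpace ℝ (Fin 2) →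
        (EuclideanSpace ℝ (Fin 2) →L[ℝ] EuclideanSpace ℝ (Fin 2)),
    ∀ ξ η : EuclideanSpace ℝ (Fin 2), ξ ≠ 0 → ξ - η ≠ 0 →
      HasGradientAt (fun z : EuclideanSpace ℝ (Fin 2) => jap2 z + jap2 (z - η))
        ((jap2 ξ)⁻¹ • ξ + (jap2 (ξ - η))⁻¹ • (ξ - η)) ξ ∧
      (jap2 ξ)⁻¹ • ξ + (jap2 (ξ - η))⁻¹ • (ξ - η) = Q ξ η ((2 : ℝ) • ξ - η) ∧
      c / japR (‖ξ‖ + ‖η‖) ^ 3 ≤ ‖Q ξ η‖ ∧ ‖Q ξ η‖ ≤ C := by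
  have hjap : jap2 = jap := rfl
  rw [hjap]
  have hQ (ξ η : EuclideanSpace ℝ (Fin 2)) :=
    exists_clm_apply_sub_eq_smul_jap_sub_smul_jap ξ (η - ξ) (M := japR (‖ξ‖ + ‖η‖))
      (jap_le_sqrt_one_add_sq (by linarith [norm_nonneg η]))
      (jap_le_sqrt_one_add_sq ((norm_sub_le η ξ).trans_eq (add_comm _ _)))
  choose Q hQ using hQ
  refine ⟨1 / 2, 1, by norm_num, by norm_num, Q, fun ξ η _ _ => ?_⟩
  obtain ⟨happly, hlow, hup⟩ := hQ ξ η
  have hu : ξ - (η - ξ) = (2 : ℝ) • ξ - η := by rw [two_smul]; abel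
  have hg : (jap ξ)⁻¹ • ξ - (jap (η - ξ))⁻¹ • (η - ξ)
      = (jap ξ)⁻¹ • ξ + (jap (ξ - η))⁻¹ • (ξ - η) := by
    rw [← neg_sub ξ η, jap_neg, smul_neg, sub_neg_eq_add]
  rw [hu, hg] at happly
  refine ⟨hasGradientAt_jap_add_jap_sub η ξ, happly.symm, ?_, hup⟩
  rwa [div_div, one_div]
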